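/- arXiv:1510.00627 — 2 statements merged into one kernel-verified Lean document; each statement's English description precedes it below -/
import Mathlib

section
/- Suppose that for every player k the per-round realized internal regret vanishes, i.e., R^k_{Int,n}/n → 0 as n → ∞. Then for every ε > 0 there exists N such that for all n ≥ N the empirical distribution μ̂_n is an ε-correlated equilibrium, i.e., for every player k and all m, l ∈ A_k: Σ_{a : a_k = m} μ̂_n(a)·(u_k(a[k↦l]) − u_k(a)) ≤ ε. -/
/-! The empirical weight `μ̂_n(a) = #{t ≤ n | a_t = a} / n` turns the correlated-equilibrium
constraint for the swap `m ↦ l` of player `k` into `1/n` times the cumulative gain that swap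
would have brought along the play, which is at most the realized internal regret `R^k_{Int,n}`;
so the constraint is eventually below any `ε > 0`. -/

open Finset Filter

theorem sum_card_fiber_mul_eq_sum_ite {ι α R : Type*} [DecidableEq α] [NonAssocSemiring R]
    (play : ι → α) (T : Finset ι) (S : Finset α) (g : α → R) :
    ∑ a ∈ S, (#{t ∈ T | play t = a} : R) * g a = ∑ t ∈ T, if play t ∈ S then g (play t) else 0 := by
  have per_round (t : ι) :
      (if play t ∈ S then g (play t) else 0) = ∑ a ∈ S, if play t = a then g a else 0 := by
    rw [sum_ite_eq]
  simp_rw [per_round, sum_comm (s := T), ← sum_filter, sum_const, nsmul_eq_mul]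

def cumulativeSwapGain {K : Type*} [DecidableEq K] {A : K → Type*} [∀ k, DecidableEq (A k)]
    (u : (∀ j, A j) → ℝ) (play : ℕ → ∀ j, A j) (k : K) (n : ℕ) (p : A k × A k) : ℝ :=
  ∑ t ∈ Icc 1 n, if play t k = p.1 then u (Function.update (play t) k p.2) - u (play t) else 0

theorem empirical_eventually_eps_correlated_equilibrium_general
    {K : Type*} [Fintype K] [DecidableEq K]
    (A : K → Type*) [∀ k, Fintype (A k)] [∀ k, DecidableEq (A k)]
    (u : ∀ k : K, (∀ j, A j) → ℝ)
    (play : ℕ → ∀ j, A j)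
    (hreg : ∀ k : K,
      Filter.Tendsto
        (fun n : ℕ =>
          (⨆ p : A k × A k, ∑ t ∈ Finset.Icc 1 n,
            (if play t k = p.1 then
              u k (Function.update (play t) k p.2) - u k (play t) else 0)) / (n : ℝ))
        Filter.atTop (nhds 0)) :
    ∀ ε > (0 : ℝ), ∃ N : ℕ, ∀ n ≥ N, ∀ (k : K) (m l : A k),
      ∑ a ∈ Finset.univ.filter (fun a : ∀ j, A j => a k = m),
          ((1 / (n : ℝ)) * ((Finset.Icc 1 n).filter (fun t => play t = a)).card) *
            (u k (Function.update a k l) - u k a) ≤ ε := by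
  intro ε hε
  obtain ⟨N, hN⟩ := eventually_atTop.1 <|
    eventually_all.2 fun k => (hreg k).eventually_lt_const hε
  refine ⟨N, fun n hn k m l => ?_⟩
  calc _ = cumulativeSwapGain (u k) play k n (m, l) / n := by
        simp_rw [mul_assoc, ← mul_sum, sum_card_fiber_mul_eq_sum_ite, mem_filter,
          mem_univ, true_and, one_div_mul_eq_div, cumulativeSwapGain]
    _ ≤ (⨆ p : A k × A k, cumulativeSwapGain (u k) play k n p) / n := by
        gcongr
        exact le_ciSup (Finite.bddAbove_range _) (m, l)
    _ ≤ ε := (hN n hn k).le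

/-- If every player's per-round realized internal regret vanishes, then
for every `ε > 0` the empirical distribution of play is eventually an `ε`-correlated
equilibrium. -/
theorem empirical_eventually_eps_correlated_equilibrium
    {K : Type*} [Fintype K] [DecidableEq K]
    (A : K → Type*) [∀ k, Fintype (A k)] [∀ k, DecidableEq (A k)] [∀ k, Nonempty (A k)]
    (u : ∀ k : K, (∀ j, A j) → ℝ)
    (play : ℕ → ∀ j, A j)
    (hreg : ∀ k : K,
      Filter.Tendsto
        (fun n : ℕ =>
          (⨆ p : A k × A k, ∑ t ∈ Finset.Icc 1 n,
            (if play t k = p.1 then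
              u k (Function.update (play t) k p.2) - u k (play t) else 0)) / (n : ℝ))
        Filter.atTop (nhds 0)) :
    ∀ ε > (0 : ℝ), ∃ N : ℕ, ∀ n ≥ N, ∀ (k : K) (m l : A k),
      ∑ a ∈ Finset.univ.filter (fun a : ∀ j, A j => a k = m),
          ((1 / (n : ℝ)) * ((Finset.Icc 1 n).filter (fun t => play t = a)).card) *
            (u k (Function.update a k l) - u k a) ≤ ε :=
  empirical_eventually_eps_correlated_equilibrium_general A u play hreg
end

section
/- Suppose that for every player k the per-round realized internal regret vanishes, i.e., R^k_{Int,n}/n → 0 as n → ∞. Then every cluster point (limit of a convergent subsequence) of the sequence of empirical distributions (μ̂_n)_{n≥1}, viewed as points of the finite-dimensional probability simplex over ∏_j A_j, is a correlated equilibrium of the game. -/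
/-!
Realized swap regret and the swap gains of the empirical distribution are the same quantity:
for every player `k` and actions `m, l`, the swap gain of `μ̂_n` from `m` to `l` equals the
cumulative regret of not having played `l` whenever `m` was played, divided by `n`. Hence it is
bounded by `R^k_{Int,n} / n`. Along a subsequence on which `μ̂_n` converges to `σ`, the swap
gains converge to those of `σ` (they are linear in the distribution) while the bounds tend to
`0`; nonnegativity and total mass `1` pass to the limit in the same way.
-/

open Filter Topology Finset

def IsCorrelatedEquilibrium {K : Type*} [Fintype K] [DecidableEq K]
    (A : K → Type*) [∀ k, Fintype (A k)] [∀ k, DecidableEq (A k)]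
    (u : ∀ k : K, (∀ j, A j) → ℝ) (σ : (∀ j, A j) → ℝ) : Prop :=
  (∀ a, 0 ≤ σ a) ∧ (∑ a : ∀ j, A j, σ a = 1) ∧
    ∀ (k : K) (m l : A k),
      ∑ a ∈ Finset.univ.filter (fun a : ∀ j, A j => a k = m),
        σ a * (u k (Function.update a k l) - u k a) ≤ 0

section Empirical

variable {α : Type*} [DecidableEq α]

noncomputable def empiricalDistrib (x : ℕ → α) (n : ℕ) (a : α) : ℝ :=
  (1 / (n : ℝ)) * #{t ∈ Icc 1 n | x t = a}

lemma empiricalDistrib_nonneg (x : ℕ → α) (n : ℕ) (a : α) : 0 ≤ empiricalDistrib x n a := by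
  unfold empiricalDistrib
  positivity

lemma sum_empiricalDistrib_mul [Fintype α] (x : ℕ → α) (n : ℕ) (g : α → ℝ) :
    ∑ a, empiricalDistrib x n a * g a = (∑ t ∈ Icc 1 n, g (x t)) / n := by
  rw [← sum_fiberwise' (Icc 1 n) x g, sum_div]
  refine sum_congr rfl fun a _ => ?_
  rw [sum_const, nsmul_eq_mul, empiricalDistrib]
  ring

lemma sum_empiricalDistrib [Fintype α] (x : ℕ → α) {n : ℕ} (hn : n ≠ 0) :
    ∑ a, empiricalDistrib x n a = 1 := by
  simpa [hn] using sum_empiricalDistrib_mul x n 1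

end Empirical

section Game

variable {K : Type*} [Fintype K] [DecidableEq K] {A : K → Type*} [∀ k, Fintype (A k)]
  [∀ k, DecidableEq (A k)]

def swapGain (u : K → (∀ j, A j) → ℝ) (k : K) (m l : A k) (σ : (∀ j, A j) → ℝ) : ℝ :=
  ∑ a ∈ univ.filter (fun a : ∀ j, A j => a k = m), σ a * (u k (Function.update a k l) - u k a)

def swapRegret (u : K → (∀ j, A j) → ℝ) (play : ℕ → ∀ j, A j) (k : K) (m l : A k) (n : ℕ) : ℝ :=
  ∑ t ∈ Icc 1 n,
    if play t k = m then u k (Function.update (play t) k l) - u k (play t) else 0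

lemma continuous_swapGain (u : K → (∀ j, A j) → ℝ) (k : K) (m l : A k) :
    Continuous (swapGain u k m l) :=
  continuous_finsetSum _ fun a _ => (continuous_apply a).mul continuous_const

lemma swapGain_empiricalDistrib (u : K → (∀ j, A j) → ℝ) (play : ℕ → ∀ j, A j) (k : K)
    (m l : A k) (n : ℕ) :
    swapGain u k m l (empiricalDistrib play n) = swapRegret u play k m l n / n := by
  rw [swapGain, sum_filter, swapRegret, ← sum_empiricalDistrib_mul play n
    fun a => if a k = m then u k (Function.update a k l) - u k a else 0]
  refine sum_congr rfl fun a _ => ?_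
  split_ifs <;> simp

lemma swapGain_empiricalDistrib_le (u : K → (∀ j, A j) → ℝ) (play : ℕ → ∀ j, A j) (k : K)
    (m l : A k) (n : ℕ) :
    swapGain u k m l (empiricalDistrib play n) ≤
      (⨆ p : A k × A k, swapRegret u play k p.1 p.2 n) / n := by
  rw [swapGain_empiricalDistrib]
  gcongr
  exact le_ciSup (f := fun p : A k × A k => swapRegret u play k p.1 p.2 n)
    (Set.finite_range _).bddAbove (m, l)

end Game

theorem clusterPt_of_empirical_isCorrelatedEquilibrium_general
    {K : Type*} [Fintype K] [DecidableEq K]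
    (A : K → Type*) [∀ k, Fintype (A k)] [∀ k, DecidableEq (A k)]
    (u : ∀ k : K, (∀ j, A j) → ℝ)
    (play : ℕ → ∀ j, A j)
    (hreg : ∀ k : K,
      Filter.Tendsto
        (fun n : ℕ =>
          (⨆ p : A k × A k, ∑ t ∈ Finset.Icc 1 n,
            (if play t k = p.1 then
              u k (Function.update (play t) k p.2) - u k (play t) else 0)) / (n : ℝ))
        Filter.atTop (nhds 0))
    (σ : (∀ j, A j) → ℝ)
    (hσ : MapClusterPt σ Filter.atTop
      (fun n : ℕ => fun a : ∀ j, A j =>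
        (1 / (n : ℝ)) * ((Finset.Icc 1 n).filter (fun t => play t = a)).card)) :
    IsCorrelatedEquilibrium A u σ := by
  obtain ⟨ψ, hψ_mono, hψ_lim⟩ :
      ∃ ψ : ℕ → ℕ, StrictMono ψ ∧ Tendsto (empiricalDistrib play ∘ ψ) atTop (𝓝 σ) :=
    hσ.tendsto_subseq
  have hψ : Tendsto ψ atTop atTop := hψ_mono.tendsto_atTop
  refine ⟨fun a => ?_, ?_, fun k m l => ?_⟩
  · exact ge_of_tendsto' (tendsto_pi_nhds.1 hψ_lim a) fun n => empiricalDistrib_nonneg _ _ _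
  · refine tendsto_nhds_unique (tendsto_finsetSum _ fun a _ => tendsto_pi_nhds.1 hψ_lim a) ?_
    refine tendsto_const_nhds.congr' ?_
    filter_upwards [hψ.eventually_ne_atTop 0] with n hn
    exact (sum_empiricalDistrib play hn).symm
  · exact le_of_tendsto_of_tendsto' ((continuous_swapGain u k m l).tendsto σ |>.comp hψ_lim)
      ((hreg k).comp hψ) fun n => swapGain_empiricalDistrib_le u play k m l (ψ n)

/-- If every player's per-round realized internal regret vanishes, then
every cluster point of the sequence of empirical distributions of play is a correlated
equilibrium of the game. -/
theorem clusterPt_of_empirical_isCorrelatedEquilibrium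
    {K : Type*} [Fintype K] [DecidableEq K]
    (A : K → Type*) [∀ k, Fintype (A k)] [∀ k, DecidableEq (A k)] [∀ k, Nonempty (A k)]
    (u : ∀ k : K, (∀ j, A j) → ℝ)
    (play : ℕ → ∀ j, A j)
    (hreg : ∀ k : K,
      Filter.Tendsto
        (fun n : ℕ =>
          (⨆ p : A k × A k, ∑ t ∈ Finset.Icc 1 n,
            (if play t k = p.1 then
              u k (Function.update (play t) k p.2) - u k (play t) else 0)) / (n : ℝ))
        Filter.atTop (nhds 0))
    (σ : (∀ j, A j) → ℝ)
    (hσ : MapClusterPt σ Filter.atTop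
      (fun n : ℕ => fun a : ∀ j, A j =>
        (1 / (n : ℝ)) * ((Finset.Icc 1 n).filter (fun t => play t = a)).card)) :
    IsCorrelatedEquilibrium A u σ :=
  clusterPt_of_empirical_isCorrelatedEquilibrium_general A u play hreg σ hσ
end
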